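/- Suppose p is non-negative and integrable on [a,b] with ∫_a^b p(t) dt > 0, and n ∈ ℕ is even. Then for every x ∈ [a,b], ∫_a^b r_x^n(t) dt ≠ 0 (indeed it is positive). -/

import Mathlib

/-!
Integration by parts against `(t - x) ^ m`, whose primitive `(t - x) ^ (m + 1) / (m + 1)`
vanishes at `x` while the primitives defining `r_x^{k+1}` vanish at `a` and `b`, gives
`∫ r_x^{k+1}(t) (t - x)^m = 1/(m+1) ∫ r_x^k(t) (t - x)^{m+1}`, with no boundary terms.
Iterating, `∫ r_x^n = (1/n!) ∫ p(t) (t - x)^n`, and for even `n` the weight `(t - x)^n` is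
positive off the null set `{x}`, so this integral is positive as soon as `∫ p` is.
-/

open MeasureTheory intervalIntegral

/-- The kernels `r_x^k`: `r_x^0 = p` and
`r_x^{k+1}(s) = −∫_a^s r_x^k` for `s ≤ x`, `∫_s^b r_x^k` for `s ≥ x`. -/
noncomputable def rk (a b x : ℝ) (p : ℝ → ℝ) : ℕ → ℝ → ℝ
  | 0 => p
  | k + 1 => fun s =>
      if s ≤ x then -(∫ t in a..s, rk a b x p k t)
      else ∫ t in s..b, rk a b x p k t

open Set Nat

theorem integral_primitive_mul_pow_sub {f : ℝ → ℝ} {c d e : ℝ}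
    (hf : IntervalIntegrable f volume c d) (he : e ∈ uIcc c d) (x : ℝ) (m : ℕ) :
    ∫ s in c..d, (∫ t in e..s, f t) * (s - x) ^ m =
      ((∫ t in e..d, f t) * (d - x) ^ (m + 1) - (∫ t in e..c, f t) * (c - x) ^ (m + 1)
        - ∫ t in c..d, f t * (t - x) ^ (m + 1)) / (m + 1) := by
  set G : ℝ → ℝ := fun s => (s - x) ^ (m + 1) / (m + 1)
  have hG : ∀ s, HasDerivAt G ((s - x) ^ m) s := fun s => by
    refine (((hasDerivAt_pow (m + 1) (s - x)).comp_sub_const s x).div_const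
      ((m : ℝ) + 1)).congr_deriv ?_
    push_cast
    field_simp
  have hparts :=
    (hf.absolutelyContinuousOnInterval_intervalIntegral he).integral_mul_deriv_eq_deriv_mul
      (ContDiffOn.absolutelyContinuousOnInterval (f := G) (by fun_prop))
  simp only [(hG _).deriv] at hparts
  have hderiv : ∫ s in c..d, deriv (fun s => ∫ t in e..s, f t) s * G s
      = ∫ s in c..d, f s * G s := by
    refine integral_congr_ae ?_
    filter_upwards [hf.ae_hasDerivAt_integral] with s hs hsI
    rw [(hs (uIoc_subset_uIcc hsI) e he).deriv]
  rw [hparts, hderiv]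
  simp only [G, ← mul_div_assoc, intervalIntegral.integral_div]
  field_simp

section Kernel

variable {a b x : ℝ} {p : ℝ → ℝ}

theorem rk_succ_of_le (k : ℕ) {s : ℝ} (hs : s ≤ x) :
    rk a b x p (k + 1) s = -∫ t in a..s, rk a b x p k t := by
  simp [rk, hs]

theorem rk_succ_of_lt (k : ℕ) {s : ℝ} (hs : x < s) :
    rk a b x p (k + 1) s = -∫ t in b..s, rk a b x p k t := by
  simp [rk, hs.not_ge, integral_symm s b]

theorem IntervalIntegrable.rk_succ (hax : a ≤ x) (hxb : x ≤ b) {k : ℕ}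
    (hk : IntervalIntegrable (rk a b x p k) volume a b) :
    IntervalIntegrable (rk a b x p (k + 1)) volume a b := by
  have hleft : IntervalIntegrable (rk a b x p (k + 1)) volume a x := by
    refine (intervalIntegrable_congr fun s hs => ?_).mpr
      ((continuousOn_primitive_interval' hk left_mem_uIcc).neg.mono
        (uIcc_subset_uIcc_left (mem_uIcc_of_le hax hxb))).intervalIntegrable
    rw [uIoc_of_le hax] at hs
    exact rk_succ_of_le k hs.2
  have hright : IntervalIntegrable (rk a b x p (k + 1)) volume x b := by
    refine (intervalIntegrable_congr fun s hs => ?_).mpr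
      ((continuousOn_primitive_interval' hk right_mem_uIcc).neg.mono
        (uIcc_subset_uIcc_right (mem_uIcc_of_le hax hxb))).intervalIntegrable
    rw [uIoc_of_le hxb] at hs
    exact rk_succ_of_lt k hs.1
  exact hleft.trans hright

theorem intervalIntegrable_rk (hax : a ≤ x) (hxb : x ≤ b) (hp : IntervalIntegrable p volume a b)
    (k : ℕ) : IntervalIntegrable (rk a b x p k) volume a b := by
  induction k with
  | zero => exact hp
  | succ k ih => exact ih.rk_succ hax hxb

theorem integral_rk_succ_mul_pow (hax : a ≤ x) (hxb : x ≤ b) {k : ℕ}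
    (hk : IntervalIntegrable (rk a b x p k) volume a b) (m : ℕ) :
    ∫ t in a..b, rk a b x p (k + 1) t * (t - x) ^ m
      = (∫ t in a..b, rk a b x p k t * (t - x) ^ (m + 1)) / (m + 1) := by
  have hx : x ∈ uIcc a b := mem_uIcc_of_le hax hxb
  have hkl := hk.mono_set (uIcc_subset_uIcc_left hx)
  have hkr := hk.mono_set (uIcc_subset_uIcc_right hx)
  have hk1 := hk.rk_succ hax hxb
  have hpow : ∀ j, Continuous fun t : ℝ => (t - x) ^ j := fun j => by fun_prop
  have hleft : ∫ t in a..x, rk a b x p (k + 1) t * (t - x) ^ m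
      = (∫ t in a..x, rk a b x p k t * (t - x) ^ (m + 1)) / (m + 1) := by
    have hcongr : EqOn (fun s => rk a b x p (k + 1) s * (s - x) ^ m)
        (fun s => -((∫ t in a..s, rk a b x p k t) * (s - x) ^ m)) (uIcc a x) := fun s hs => by
      rw [uIcc_of_le hax] at hs
      simp only [rk_succ_of_le k hs.2, neg_mul]
    rw [intervalIntegral.integral_congr hcongr, intervalIntegral.integral_neg,
      integral_primitive_mul_pow_sub hkl left_mem_uIcc]
    simp only [integral_same, sub_self, zero_pow m.succ_ne_zero]
    ring
  have hright : ∫ t in x..b, rk a b x p (k + 1) t * (t - x) ^ m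
      = (∫ t in x..b, rk a b x p k t * (t - x) ^ (m + 1)) / (m + 1) := by
    have hcongr : ∀ s ∈ uIoc x b, rk a b x p (k + 1) s * (s - x) ^ m
        = -((∫ t in b..s, rk a b x p k t) * (s - x) ^ m) := fun s hs => by
      rw [uIoc_of_le hxb] at hs
      rw [rk_succ_of_lt k hs.1, neg_mul]
    rw [intervalIntegral.integral_congr_ae (ae_of_all _ hcongr), intervalIntegral.integral_neg,
      integral_primitive_mul_pow_sub hkr right_mem_uIcc]
    simp only [integral_same, sub_self, zero_pow m.succ_ne_zero]
    ring
  rw [← integral_add_adjacent_intervals (hk1.mono_set (uIcc_subset_uIcc_left hx)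
      |>.mul_continuousOn (hpow m).continuousOn) (hk1.mono_set (uIcc_subset_uIcc_right hx)
      |>.mul_continuousOn (hpow m).continuousOn),
    ← integral_add_adjacent_intervals (hkl.mul_continuousOn (hpow (m + 1)).continuousOn)
      (hkr.mul_continuousOn (hpow (m + 1)).continuousOn), hleft, hright, add_div]

theorem integral_rk_mul_pow (hax : a ≤ x) (hxb : x ≤ b)
    (hp : IntervalIntegrable p volume a b) (k m : ℕ) :
    ∫ t in a..b, rk a b x p k t * (t - x) ^ m
      = m ! / (k + m)! * ∫ t in a..b, p t * (t - x) ^ (k + m) := by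
  induction k generalizing m with
  | zero => simp [rk, (Nat.factorial_pos m).ne']
  | succ k ih =>
    rw [integral_rk_succ_mul_pow hax hxb (intervalIntegrable_rk hax hxb hp k), ih,
      show k + (m + 1) = k + 1 + m by omega, Nat.factorial_succ]
    push_cast
    field_simp

end Kernel

theorem integral_mul_pow_sub_pos {a b : ℝ} {p : ℝ → ℝ} (hab : a ≤ b)
    (hp : IntervalIntegrable p volume a b) (hp0 : ∀ t ∈ Icc a b, 0 ≤ p t)
    (hppos : 0 < ∫ t in a..b, p t) {n : ℕ} (hn : Even n) (x : ℝ) :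
    0 < ∫ t in a..b, p t * (t - x) ^ n := by
  have hIoc : uIoc a b ⊆ Icc a b := uIcc_of_le hab ▸ uIoc_subset_uIcc
  rw [integral_pos_iff_support_of_nonneg_ae'
    (ae_restrict_of_forall_mem measurableSet_uIoc fun t ht => hp0 t (hIoc ht)) hp]
    at hppos
  obtain ⟨hab, hsupp⟩ := hppos
  rw [integral_pos_iff_support_of_nonneg_ae'
    (ae_restrict_of_forall_mem measurableSet_uIoc fun t ht =>
      mul_nonneg (hp0 t (hIoc ht)) (hn.pow_nonneg _))
    (hp.mul_continuousOn (by fun_prop))]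
  refine ⟨hab, hsupp.trans_le ?_⟩
  calc volume (Function.support p ∩ Ioc a b)
      = volume ((Function.support p ∩ Ioc a b) \ {x}) :=
        (measure_sdiff_null (measure_singleton x)).symm
    _ ≤ volume (Function.support (fun t => p t * (t - x) ^ n) ∩ Ioc a b) :=
        measure_mono fun t ⟨⟨hpt, ht⟩, htx⟩ =>
          ⟨mul_ne_zero hpt (pow_ne_zero _ (sub_ne_zero.2 htx)), ht⟩

theorem stmt11_general (a b : ℝ) (n : ℕ) (hne : Even n)
    (p : ℝ → ℝ) (hp : IntervalIntegrable p volume a b)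
    (hp0 : ∀ t ∈ Set.Icc a b, 0 ≤ p t)
    (hppos : 0 < ∫ t in a..b, p t) :
    ∀ x ∈ Set.Icc a b, 0 < ∫ t in a..b, rk a b x p n t := by
  rintro x ⟨hax, hxb⟩
  have hmoment := integral_rk_mul_pow hax hxb hp n 0
  simp only [pow_zero, mul_one, add_zero, Nat.factorial_zero, Nat.cast_one] at hmoment
  rw [hmoment]
  exact mul_pos (by positivity)
    (integral_mul_pow_sub_pos (hax.trans hxb) hp hp0 hppos hne x)

/-- If `p ≥ 0` is integrable on `[a,b]` with `∫_a^b p > 0` and `n` is even, then for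
every `x ∈ [a,b]` the integral `∫_a^b r_x^n(t) dt` is positive (in particular nonzero). -/
theorem stmt11 (a b : ℝ) (hab : a < b) (n : ℕ) (hn : 0 < n) (hne : Even n)
    (p : ℝ → ℝ) (hp : IntervalIntegrable p volume a b)
    (hp0 : ∀ t ∈ Set.Icc a b, 0 ≤ p t)
    (hppos : 0 < ∫ t in a..b, p t) :
    ∀ x ∈ Set.Icc a b, 0 < ∫ t in a..b, rk a b x p n t :=
  stmt11_general a b n hne p hp hp0 hppos
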